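/- Let α satisfy φ < α ≤ 2, where φ = (1 + √5)/2 is the golden ratio, and let n₁, n₂, m₁, m₂ be positive integers with n₁ ≤ α·n₂ and n₂ ≤ α·n₁. Then G_α(n₁, m₁) + G_α(n₂, m₂) + n₁ + n₂ ≤ G_α(n₁ + n₂, m₁ + m₂), where G_α(n, m) = n·(d_α − 1 + c_α·log₂ m) (with d_α taken to be d₂ = 6 − c₂·(3·log₂ 3 − 1) when α = 2). -/

import Mathlib

/-! The `d_α` terms cancel, and `c_α = log 2 / h(1/(α+1))` with `h` the binary entropy (in nats),
so the claim is `(n₁ + n₂)·h(1/(α+1)) ≤ (n₁ + n₂)·log(m₁ + m₂) − n₁·log m₁ − n₂·log m₂`.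
The balance conditions put `p = n₁/(n₁ + n₂)` in `[1/(α+1), α/(α+1)]`, where concavity and the
symmetry `h(p) = h(1 − p)` give `h(1/(α+1)) ≤ h(p)`; and `(n₁ + n₂)·h(p)` is bounded by the right
side by the two-point Gibbs inequality, i.e. concavity of `log`. -/

open Real

/-- The constant `c_α = (α+1)/((α+1)·log₂(α+1) − α·log₂ α)`. -/
noncomputable def cA (α : ℝ) : ℝ :=
  (α + 1) / ((α + 1) * logb 2 (α + 1) - α * logb 2 α)

/-- The constant `c₂ = 3 / log₂(27/4)`. -/
noncomputable def c2 : ℝ := 3 / logb 2 (27 / 4)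

/-- The constant `d₂ = 6 − c₂·(3·log₂ 3 − 1)`. -/
noncomputable def d2 : ℝ := 6 - c2 * (3 * logb 2 3 - 1)

/-- `k₀(α)` is the least `ℓ ∈ ℕ` such that `(α² − α − 1)/(α − 1) ≥ α^(−ℓ)`. -/
noncomputable def k0 (α : ℝ) : ℕ :=
  sInf {ℓ : ℕ | (α ^ 2 - α - 1) / (α - 1) ≥ α ^ (-(ℓ : ℝ))}

/-- The constant `d_α`, taken to be `d₂` when `α = 2`. -/
noncomputable def dA (α : ℝ) : ℝ :=
  if α = 2 then d2
  else 2 ^ (k0 α + 1) * max ((k0 α : ℝ) + 1) 3 * (2 * α - 1) / (α - 1) + 1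

/-- `G_α(n, m) = n·(d_α − 1 + c_α·log₂ m)`. -/
noncomputable def G (α : ℝ) (n m : ℕ) : ℝ := (n : ℝ) * (dA α - 1 + cA α * logb 2 m)

lemma binEntropy_le_of_mem_Icc {q p : ℝ} (hq : 0 ≤ q) (hp : p ∈ Set.Icc q (1 - q)) :
    binEntropy q ≤ binEntropy p := by
  have hq₁ : q ≤ 1 - q := hp.1.trans hp.2
  have h := strictConcave_binEntropy.concaveOn.min_le_of_mem_Icc
    ⟨hq, by linarith⟩ ⟨by linarith, by linarith⟩ hp
  rwa [binEntropy_one_sub, min_self] at h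

lemma binEntropy_le_log_add_sub {p x y : ℝ} (hp₀ : 0 < p) (hp₁ : p < 1) (hx : 0 < x)
    (hy : 0 < y) : binEntropy p ≤ log (x + y) - p * log x - (1 - p) * log y := by
  have hq₀ : 0 < 1 - p := by linarith
  have h := strictConcaveOn_log_Ioi.concaveOn.2 (x := x / p) (y := y / (1 - p))
    (div_pos hx hp₀) (div_pos hy hq₀) hp₀.le hq₀.le (by ring)
  rw [smul_eq_mul, smul_eq_mul, smul_eq_mul, smul_eq_mul, mul_div_cancel₀ x hp₀.ne',
    mul_div_cancel₀ y hq₀.ne', log_div hx.ne' hp₀.ne', log_div hy.ne' hq₀.ne'] at h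
  rw [binEntropy, log_inv, log_inv]
  linarith

lemma mul_binEntropy_div_add_le {a b x y : ℝ} (ha : 0 < a) (hb : 0 < b) (hx : 0 < x)
    (hy : 0 < y) : (a + b) * binEntropy (a / (a + b)) ≤
      (a + b) * log (x + y) - a * log x - b * log y := by
  have hs : 0 < a + b := add_pos ha hb
  have h := binEntropy_le_log_add_sub (div_pos ha hs) ((div_lt_one hs).2 (by linarith)) hx hy
  have h1 : 1 - a / (a + b) = b / (a + b) := by field_simp; ring
  rw [h1] at h
  calc (a + b) * binEntropy (a / (a + b))
      ≤ (a + b) * (log (x + y) - a / (a + b) * log x - b / (a + b) * log y) :=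
        mul_le_mul_of_nonneg_left h hs.le
    _ = (a + b) * log (x + y) - a * log x - b * log y := by field_simp

lemma cA_eq_log_two_div_binEntropy {α : ℝ} (hα : 0 < α) :
    cA α = log 2 / binEntropy (α + 1)⁻¹ := by
  have hα₁ : 0 < α + 1 := by linarith
  have h1 : 1 - (α + 1)⁻¹ = α / (α + 1) := by field_simp; ring
  rw [cA, binEntropy, h1, inv_inv, inv_div, log_div hα₁.ne' hα.ne', logb, logb]
  field_simp
  ring

lemma G_add_sub_G_sub_G (α : ℝ) (n₁ n₂ m₁ m₂ : ℕ) :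
    G α (n₁ + n₂) (m₁ + m₂) - G α n₁ m₁ - G α n₂ m₂ =
      cA α * ((n₁ + n₂) * logb 2 (m₁ + m₂) - n₁ * logb 2 m₁ - n₂ * logb 2 m₂) := by
  simp only [G]
  push_cast
  ring

lemma add_le_cA_mul {α a b x y : ℝ} (ha : 0 < a) (hb : 0 < b) (hx : 0 < x) (hy : 0 < y)
    (hab : a ≤ α * b) (hba : b ≤ α * a) :
    a + b ≤ cA α * ((a + b) * logb 2 (x + y) - a * logb 2 x - b * logb 2 y) := by
  have hα : 0 < α := pos_of_mul_pos_left (ha.trans_le hab) hb.le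
  have hs : 0 < a + b := add_pos ha hb
  have hα₁ : 0 < α + 1 := by linarith
  have hq : (α + 1)⁻¹ ≤ a / (a + b) := by
    rw [inv_eq_one_div, div_le_div_iff₀ hα₁ hs]; linarith
  have hq' : a / (a + b) ≤ 1 - (α + 1)⁻¹ := by
    rw [inv_eq_one_div, one_sub_div hα₁.ne', div_le_div_iff₀ hs hα₁]; linarith
  have hHq : 0 < binEntropy (α + 1)⁻¹ :=
    binEntropy_pos (by positivity) (inv_lt_one_of_one_lt₀ (by linarith))
  have hH : (a + b) * binEntropy (α + 1)⁻¹ ≤ (a + b) * log (x + y) - a * log x - b * log y :=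
    (mul_le_mul_of_nonneg_left (binEntropy_le_of_mem_Icc (by positivity) ⟨hq, hq'⟩) hs.le).trans
      (mul_binEntropy_div_add_le ha hb hx hy)
  have hlog2 : log 2 ≠ 0 := (log_pos one_lt_two).ne'
  calc a + b ≤ ((a + b) * log (x + y) - a * log x - b * log y) / binEntropy (α + 1)⁻¹ := by
        rw [le_div_iff₀ hHq]; linarith
    _ = _ := by
        rw [cA_eq_log_two_div_binEntropy hα, logb, logb, logb]
        field_simp

theorem G_merge_bound_general (α : ℝ)
    (n₁ n₂ m₁ m₂ : ℕ) (hn₁ : 0 < n₁) (hn₂ : 0 < n₂) (hm₁ : 0 < m₁) (hm₂ : 0 < m₂)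
    (h1 : (n₁ : ℝ) ≤ α * n₂) (h2 : (n₂ : ℝ) ≤ α * n₁) :
    G α n₁ m₁ + G α n₂ m₂ + n₁ + n₂ ≤ G α (n₁ + n₂) (m₁ + m₂) := by
  have hgap := add_le_cA_mul (x := m₁) (y := m₂) (Nat.cast_pos.2 hn₁) (Nat.cast_pos.2 hn₂)
    (Nat.cast_pos.2 hm₁) (Nat.cast_pos.2 hm₂) h1 h2
  linarith [G_add_sub_G_sub_G α n₁ n₂ m₁ m₂]

/-- Lemma 9: for `φ < α ≤ 2`, if `n₁ ≤ α·n₂` and `n₂ ≤ α·n₁` then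
`G_α(n₁,m₁) + G_α(n₂,m₂) + n₁ + n₂ ≤ G_α(n₁+n₂, m₁+m₂)`. -/
theorem G_merge_bound (α : ℝ) (hφ : (1 + Real.sqrt 5) / 2 < α) (hα2 : α ≤ 2)
    (n₁ n₂ m₁ m₂ : ℕ) (hn₁ : 0 < n₁) (hn₂ : 0 < n₂) (hm₁ : 0 < m₁) (hm₂ : 0 < m₂)
    (h1 : (n₁ : ℝ) ≤ α * n₂) (h2 : (n₂ : ℝ) ≤ α * n₁) :
    G α n₁ m₁ + G α n₂ m₂ + n₁ + n₂ ≤ G α (n₁ + n₂) (m₁ + m₂) :=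
  G_merge_bound_general α n₁ n₂ m₁ m₂ hn₁ hn₂ hm₁ hm₂ h1 h2
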